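/- For v ∈ (0, 1/2) and any open connected arc U ⊆ A₁ \ (A₁₂ ∪ A₁₃), the image K₁(U) is a connected arc whose length satisfies |K₁(U)| ≥ c·|U| where c = (1-v²)/(v² + 1 - 2v·cos(2π/3 - arccos v)) > 1. -/

import Mathlib

/-! The Kasner map is a decreasing diffeomorphism of `(-π, π)` with
`|K₁'(φ)| = (1 - v²)/(v² + 1 - 2v cos φ)`, which decreases as `|φ|` grows. On `|φ| < θ` with
`θ = 2π/3 - arccos v ∈ (0, π/3)` it is therefore at least its value at `θ`, and that value exceeds
`1` because `cos θ > 1/2 > v`. The one-dimensional change of variables formula for the injective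
map `K₁` turns this pointwise bound on `|K₁'|` into the bound on lengths. -/

open Real MeasureTheory Set

theorem ofReal_mul_volume_le_volume_image {f f' : ℝ → ℝ} {s : Set ℝ} {c : ℝ}
    (hs : MeasurableSet s) (hf' : ∀ x ∈ s, HasDerivWithinAt f (f' x) s x) (hf : InjOn f s)
    (hc : ∀ x ∈ s, c ≤ |f' x|) :
    ENNReal.ofReal c * volume s ≤ volume (f '' s) :=
  calc ENNReal.ofReal c * volume s = ∫⁻ _ in s, ENNReal.ofReal c := (setLIntegral_const s _).symm
    _ ≤ ∫⁻ x in s, ENNReal.ofReal |f' x| :=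
      setLIntegral_mono' hs fun x hx => ENNReal.ofReal_le_ofReal (hc x hx)
    _ = volume (f '' s) := by
      simpa using (lintegral_image_eq_lintegral_abs_deriv_mul hs hf' hf 1).symm

noncomputable def kasnerMap (v φ : ℝ) : ℝ :=
  π - 2 * arctan ((1 + v) / (1 - v) * tan (φ / 2))

noncomputable def kasnerExpansion (v φ : ℝ) : ℝ :=
  (1 - v ^ 2) / (v ^ 2 + 1 - 2 * v * cos φ)

theorem kasner_denom_eq_half_angle (v φ : ℝ) :
    v ^ 2 + 1 - 2 * v * cos φ = (1 - v) ^ 2 * cos (φ / 2) ^ 2 + (1 + v) ^ 2 * sin (φ / 2) ^ 2 := by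
  have hcos : cos φ = cos (φ / 2) ^ 2 - sin (φ / 2) ^ 2 := by
    rw [← cos_two_mul', mul_div_cancel₀ φ two_ne_zero]
  rw [hcos]
  linear_combination (v ^ 2 + 1) * (sin_sq_add_cos_sq (φ / 2)).symm

section Kasner

variable {v : ℝ}

theorem hasDerivAt_kasnerMap (hv : v ≠ 1) {φ : ℝ} (hφ : cos (φ / 2) ≠ 0) :
    HasDerivAt (kasnerMap v) (-kasnerExpansion v φ) φ := by
  have hhalf : HasDerivAt (fun φ : ℝ => φ / 2) (1 / 2) φ := (hasDerivAt_id φ).div_const 2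
  have hK := ((((hasDerivAt_tan hφ).comp φ hhalf).const_mul ((1 + v) / (1 - v))).arctan.const_mul
    (2 : ℝ)).const_sub π
  refine hK.congr_deriv ?_
  have hv' : 1 - v ≠ 0 := sub_ne_zero.mpr (Ne.symm hv)
  have hden : (1 - v) ^ 2 * cos (φ / 2) ^ 2 + (1 + v) ^ 2 * sin (φ / 2) ^ 2 ≠ 0 := by
    positivity
  rw [kasnerExpansion, kasner_denom_eq_half_angle, Function.comp_apply, tan_eq_sin_div_cos]
  field_simp
  ring

theorem strictAntiOn_kasnerMap (hv0 : -1 < v) (hv1 : v < 1) :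
    StrictAntiOn (kasnerMap v) (Ioo (-π) π) := by
  intro a ha b hb hab
  have hk : 0 < (1 + v) / (1 - v) := div_pos (by linarith) (by linarith)
  have htan : tan (a / 2) < tan (b / 2) :=
    strictMonoOn_tan ⟨by linarith [ha.1], by linarith [ha.2]⟩
      ⟨by linarith [hb.1], by linarith [hb.2]⟩ (by linarith)
  have := arctan_strictMono (mul_lt_mul_of_pos_left htan hk)
  simp only [kasnerMap]
  linarith

theorem kasner_denom_pos (hv0 : 0 ≤ v) (hv1 : v < 1) (φ : ℝ) :
    0 < v ^ 2 + 1 - 2 * v * cos φ := by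
  nlinarith [cos_le_one φ]

theorem kasnerExpansion_le_of_abs_le (hv0 : 0 ≤ v) (hv1 : v < 1) {θ φ : ℝ} (hθ : θ ≤ π)
    (hφ : |φ| ≤ θ) : kasnerExpansion v θ ≤ kasnerExpansion v φ := by
  have h : cos θ ≤ cos φ := cos_abs φ ▸ cos_le_cos_of_nonneg_of_le_pi (abs_nonneg φ) hθ hφ
  unfold kasnerExpansion
  gcongr
  · nlinarith
  · exact kasner_denom_pos hv0 hv1 φ

theorem one_lt_kasnerExpansion (hv0 : 0 < v) {φ : ℝ} (h : v < cos φ) :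
    1 < kasnerExpansion v φ := by
  have hv1 : v < 1 := h.trans_le (cos_le_one φ)
  rw [kasnerExpansion, one_lt_div (kasner_denom_pos hv0.le hv1 φ)]
  nlinarith

end Kasner

theorem two_pi_div_three_sub_arccos_mem (v : ℝ) (hv : v ∈ Ioo (0 : ℝ) (1 / 2)) :
    2 * π / 3 - arccos v ∈ Ioo 0 (π / 3) := by
  have hlt : arccos v < π / 2 := arccos_lt_pi_div_two.mpr hv.1
  have hgt : π / 3 < arccos v := by
    rw [← arccos_cos (by positivity) (by linarith [pi_pos] : π / 3 ≤ π), cos_pi_div_three]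
    exact strictAntiOn_arccos ⟨by linarith [hv.1], by linarith [hv.2]⟩
      ⟨by norm_num, by norm_num⟩ hv.2
  constructor <;> linarith

theorem image_length_expansion (v : ℝ) (hv : v ∈ Set.Ioo (0:ℝ) (1/2))
    (U : Set ℝ) (hUopen : IsOpen U) (hUconn : IsPreconnected U)
    (hUsub : U ⊆ Set.Ioo (Real.arccos v - 2*π/3) (2*π/3 - Real.arccos v)) :
    IsPreconnected ((fun φ : ℝ => π - 2 * Real.arctan ((1 + v) / (1 - v) * Real.tan (φ / 2))) '' U) ∧
    (1 - v ^ 2) / (v ^ 2 + 1 - 2 * v * Real.cos (2*π/3 - Real.arccos v)) > 1 ∧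
    ENNReal.ofReal ((1 - v ^ 2) / (v ^ 2 + 1 - 2 * v * Real.cos (2*π/3 - Real.arccos v)))
        * volume U
      ≤ volume ((fun φ : ℝ => π - 2 * Real.arctan ((1 + v) / (1 - v) * Real.tan (φ / 2))) '' U) := by
  have hUθ : U ⊆ Ioo (-(2 * π / 3 - arccos v)) (2 * π / 3 - arccos v) := fun φ hφ =>
    ⟨by linarith [(hUsub hφ).1], (hUsub hφ).2⟩
  obtain ⟨hθ0, hθ⟩ := two_pi_div_three_sub_arccos_mem v hv
  set θ := 2 * π / 3 - arccos v
  have hv0 : 0 < v := hv.1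
  have hv1 : v < 1 := by linarith [hv.2]
  have hUπ : U ⊆ Ioo (-π) π := fun φ hφ =>
    ⟨by linarith [(hUθ hφ).1, pi_pos], by linarith [(hUθ hφ).2, pi_pos]⟩
  have hderiv : ∀ φ ∈ U, HasDerivAt (kasnerMap v) (-kasnerExpansion v φ) φ := fun φ hφ =>
    hasDerivAt_kasnerMap hv1.ne (cos_pos_of_mem_Ioo
      ⟨by linarith [(hUπ hφ).1], by linarith [(hUπ hφ).2]⟩).ne'
  have hcosθ : v < cos θ := by
    have := cos_lt_cos_of_nonneg_of_le_pi hθ0.le (by linarith [pi_pos]) hθ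
    rw [cos_pi_div_three] at this
    linarith [hv.2]
  refine ⟨hUconn.image _ fun φ hφ => (hderiv φ hφ).continuousAt.continuousWithinAt,
    one_lt_kasnerExpansion hv0 hcosθ,
    ofReal_mul_volume_le_volume_image hUopen.measurableSet
      (fun φ hφ => (hderiv φ hφ).hasDerivWithinAt)
      ((strictAntiOn_kasnerMap (by linarith) hv1).injOn.mono hUπ) fun φ hφ => ?_⟩
  calc kasnerExpansion v θ ≤ kasnerExpansion v φ :=
        kasnerExpansion_le_of_abs_le hv0.le hv1 (by linarith [pi_pos])
          (abs_le.mpr ⟨(hUθ hφ).1.le, (hUθ hφ).2.le⟩)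
    _ ≤ |-kasnerExpansion v φ| := by rw [abs_neg]; exact le_abs_self _
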